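/- In the barrier-KKT context, let (x^μ, λ̄, ν) be a μ-central point. Then for every feasible point x ∈ 𝒞 (i.e., φ_i(x) ≤ 0 for all i and C x = d), one has ⟪F(x^μ), x^μ − x⟫ ≤ m·μ. -/

import Mathlib

open scoped RealInnerProductSpace
open Matrix

/-- The feasible set `𝒞 = {x | φ_i(x) ≤ 0 for all i, and C x = d}`. -/
def FeasSet {n m p : ℕ} (φ : Fin m → EuclideanSpace ℝ (Fin n) → ℝ)
    (C : Matrix (Fin p) (Fin n) ℝ) (d : EuclideanSpace ℝ (Fin p)) :
    Set (EuclideanSpace ℝ (Fin n)) :=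
  {x | (∀ i, φ i x ≤ 0) ∧ Matrix.toEuclideanLin C x = d}

/-- A `μ`-central point `(x^μ, λ̄, ν)`: positive multipliers, stationarity, perturbed
complementarity `λ̄ᵢ φᵢ(x^μ) = −μ`, and primal feasibility `C x^μ = d`. -/
def IsMuCentral {n m p : ℕ} (F : EuclideanSpace ℝ (Fin n) → EuclideanSpace ℝ (Fin n))
    (φ : Fin m → EuclideanSpace ℝ (Fin n) → ℝ)
    (C : Matrix (Fin p) (Fin n) ℝ) (d : EuclideanSpace ℝ (Fin p)) (μ : ℝ)
    (xμ : EuclideanSpace ℝ (Fin n)) (lamb : Fin m → ℝ)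
    (ν : EuclideanSpace ℝ (Fin p)) : Prop :=
  (∀ i, 0 < lamb i) ∧
  F xμ + (∑ i, lamb i • gradient (φ i) xμ) + Matrix.toEuclideanLin Cᵀ ν = 0 ∧
  (∀ i, lamb i * φ i xμ = -μ) ∧
  Matrix.toEuclideanLin C xμ = d

/-!
Pairing the stationarity equation with `x^μ - x` kills the equality-constraint term, since
`⟪Cᵀν, x^μ - x⟫ = ⟪ν, C x^μ - C x⟫ = 0`, and leaves `⟪F(x^μ), x^μ - x⟫ = Σ λ̄ᵢ ⟪∇φᵢ(x^μ), x - x^μ⟫`.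
By convexity each summand is at most `λ̄ᵢ (φᵢ(x) - φᵢ(x^μ)) = λ̄ᵢ φᵢ(x) + μ ≤ μ`.
-/

theorem ConvexOn.hasFDerivAt_apply_sub_le {E : Type*} [NormedAddCommGroup E] [NormedSpace ℝ E]
    {s : Set E} {f : E → ℝ} {f' : E →L[ℝ] ℝ} {x y : E} (hf : ConvexOn ℝ s f)
    (hx : x ∈ s) (hy : y ∈ s) (hf' : HasFDerivAt f f' x) :
    f' (y - x) ≤ f y - f x := by
  let L := AffineMap.lineMap (k := ℝ) x y
  have hfL : HasDerivAt (f ∘ L) (f' (y - x)) 0 :=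
    (by simpa [L] using hf' : HasFDerivAt f f' (L 0)).comp_hasDerivAt 0
      AffineMap.hasDerivAt_lineMap
  have hconv : ConvexOn ℝ (L ⁻¹' s) (f ∘ L) := hf.comp_affineMap L
  simpa [slope, L] using
    hconv.le_slope_of_hasDerivAt (by simpa [L] using hx) (by simpa [L] using hy) one_pos hfL

theorem ConvexOn.inner_gradient_sub_le {E : Type*} [NormedAddCommGroup E]
    [InnerProductSpace ℝ E] [CompleteSpace E] {s : Set E} {f : E → ℝ} {x y : E}
    (hf : ConvexOn ℝ s f) (hx : x ∈ s) (hy : y ∈ s) (hfx : DifferentiableAt ℝ f x) :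
    ⟪gradient f x, y - x⟫ ≤ f y - f x := by
  simpa using hf.hasFDerivAt_apply_sub_le hx hy hfx.hasGradientAt

theorem inner_toEuclideanLin_transpose_sub_eq_zero {n p : ℕ} (C : Matrix (Fin p) (Fin n) ℝ)
    (ν : EuclideanSpace ℝ (Fin p)) {x y : EuclideanSpace ℝ (Fin n)}
    (hxy : toEuclideanLin C x = toEuclideanLin C y) :
    ⟪toEuclideanLin Cᵀ ν, x - y⟫ = 0 := by
  rw [← conjTranspose_eq_transpose_of_trivial, toEuclideanLin_conjTranspose_eq_adjoint,
    LinearMap.adjoint_inner_left, map_sub, hxy, sub_self, inner_zero_right]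

theorem stmt_16_general {n m p : ℕ}
    (φ : Fin m → EuclideanSpace ℝ (Fin n) → ℝ)
    (hφconv : ∀ i, ConvexOn ℝ Set.univ (φ i))
    (hφdiff : ∀ i, Differentiable ℝ (φ i))
    (C : Matrix (Fin p) (Fin n) ℝ) (d : EuclideanSpace ℝ (Fin p))
    (μ : ℝ)
    (F : EuclideanSpace ℝ (Fin n) → EuclideanSpace ℝ (Fin n))
    (xμ : EuclideanSpace ℝ (Fin n)) (lamb : Fin m → ℝ) (ν : EuclideanSpace ℝ (Fin p))
    (hcentral : IsMuCentral F φ C d μ xμ lamb ν) :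
    ∀ x ∈ FeasSet φ C d, ⟪F xμ, xμ - x⟫ ≤ (m : ℝ) * μ := by
  obtain ⟨hlamb, hstat, hcompl, hCxμ⟩ := hcentral
  rintro x ⟨hφx, hCx⟩
  have hF : F xμ = -((∑ i, lamb i • gradient (φ i) xμ) + toEuclideanLin Cᵀ ν) :=
    eq_neg_of_add_eq_zero_left ((add_assoc _ _ _).symm.trans hstat)
  have hsplit : ⟪F xμ, xμ - x⟫ = ∑ i, lamb i * ⟪gradient (φ i) xμ, x - xμ⟫ := by
    rw [hF, inner_neg_left, inner_add_left,
      inner_toEuclideanLin_transpose_sub_eq_zero C ν (hCxμ.trans hCx.symm), add_zero, sum_inner,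
      ← Finset.sum_neg_distrib]
    refine Finset.sum_congr rfl fun i _ => ?_
    rw [real_inner_smul_left, ← neg_sub x xμ, inner_neg_right, mul_neg, neg_neg]
  have hterm : ∀ i, lamb i * ⟪gradient (φ i) xμ, x - xμ⟫ ≤ μ := fun i => by
    have hgrad := (hφconv i).inner_gradient_sub_le (Set.mem_univ xμ) (Set.mem_univ x)
      (hφdiff i xμ)
    calc lamb i * ⟪gradient (φ i) xμ, x - xμ⟫ ≤ lamb i * (φ i x - φ i xμ) :=
          mul_le_mul_of_nonneg_left hgrad (hlamb i).le
      _ = lamb i * φ i x + μ := by rw [mul_sub, hcompl i, sub_neg_eq_add]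
      _ ≤ μ := by linarith [mul_nonpos_of_nonneg_of_nonpos (hlamb i).le (hφx i)]
  calc ⟪F xμ, xμ - x⟫ = ∑ i, lamb i * ⟪gradient (φ i) xμ, x - xμ⟫ := hsplit
    _ ≤ ∑ _i : Fin m, μ := Finset.sum_le_sum fun i _ => hterm i
    _ = m * μ := by simp

/-- Eq. (eq_app:1) in the paper: for a `μ`-central point `x^μ` and any
feasible `x`, `⟪F(x^μ), x^μ − x⟫ ≤ m μ`. -/
theorem stmt_16 {n m p : ℕ}
    (φ : Fin m → EuclideanSpace ℝ (Fin n) → ℝ)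
    (hφconv : ∀ i, ConvexOn ℝ Set.univ (φ i))
    (hφdiff : ∀ i, Differentiable ℝ (φ i))
    (C : Matrix (Fin p) (Fin n) ℝ) (d : EuclideanSpace ℝ (Fin p))
    (μ : ℝ) (hμ : 0 < μ)
    (F : EuclideanSpace ℝ (Fin n) → EuclideanSpace ℝ (Fin n))
    (xμ : EuclideanSpace ℝ (Fin n)) (lamb : Fin m → ℝ) (ν : EuclideanSpace ℝ (Fin p))
    (hcentral : IsMuCentral F φ C d μ xμ lamb ν) :
    ∀ x ∈ FeasSet φ C d, ⟪F xμ, xμ - x⟫ ≤ (m : ℝ) * μ :=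
  stmt_16_general φ hφconv hφdiff C d μ F xμ lamb ν hcentral
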